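/- The function R(x) = x²/4 − μ*(x) attains its maximum over [√(2/π), ∞) at a unique point v*, and v* > √(2/π). Moreover, setting α* = R(v*), for every x ≥ √(2/π): (1/4)·(x − v*)² ≤ α* − R(x) ≤ 10·(x − v*)². -/

import Mathlib

open MeasureTheory ProbabilityTheory

noncomputable def gaussMatrix (n : ℕ) : Measure (Fin n → Fin n → ℝ) :=
  Measure.pi fun _ => Measure.pi fun _ => gaussianReal 0 1

noncomputable def gaussVec (n : ℕ) : Measure (Fin n → ℝ) :=
  Measure.pi fun _ => gaussianReal 0 1

/-- The symmetric, zero-diagonal coupling matrix built from the i.i.d. upper-triangular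
standard Gaussians. -/
def Wmat {n : ℕ} (ω : Fin n → Fin n → ℝ) (i j : Fin n) : ℝ :=
  if i < j then ω i j else if j < i then ω j i else 0

/-- The Sherrington--Kirkpatrick Hamiltonian `H(σ) = ∑_{i<j} σ_i σ_j W_{ij}`. -/
noncomputable def Ham {n : ℕ} (σ : Fin n → ℝ) (ω : Fin n → Fin n → ℝ) : ℝ :=
  ∑ i : Fin n, ∑ j : Fin n, if i < j then σ i * σ j * Wmat ω i j else 0

/-- `σ` with its `i`-th spin flipped. -/
def flipSpin {n : ℕ} (σ : Fin n → ℝ) (i : Fin n) : Fin n → ℝ :=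
  Function.update σ i (-(σ i))

/-- `σ` is locally optimal if no single spin flip decreases the energy. -/
def IsLocalOpt {n : ℕ} (σ : Fin n → ℝ) (ω : Fin n → Fin n → ℝ) : Prop :=
  ∀ i : Fin n, Ham σ ω ≤ Ham (flipSpin σ i) ω

/-- `σ ∈ {−1,+1}^n`. -/
def IsSpin {n : ℕ} (σ : Fin n → ℝ) : Prop := ∀ i, σ i = 1 ∨ σ i = -1

/-- `‖x‖₁ = ∑ |x i|`. -/
def l1 {n : ℕ} (ω : Fin n → ℝ) : ℝ := ∑ i, |ω i|

/-- The standard normal cumulative distribution function `Φ`. -/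
noncomputable def normCdf (t : ℝ) : ℝ :=
  ∫ x in Set.Iic t, (Real.sqrt (2 * Real.pi))⁻¹ * Real.exp (-x ^ 2 / 2)

/-- `φ(λ) = log (2 Φ(λ))`. -/
noncomputable def phiFn (l : ℝ) : ℝ := Real.log (2 * normCdf l)

/-- The Fenchel–Légendre transform `μ*(x) = sup_{λ ≥ 0} (λ x − λ²/2 − φ(λ))`. -/
noncomputable def muStar (x : ℝ) : ℝ :=
  ⨆ l : {l : ℝ // 0 ≤ l}, ((l : ℝ) * x - (l : ℝ) ^ 2 / 2 - phiFn l)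

/-- `R(x) = x²/4 − μ*(x)`. -/
noncomputable def Rfun (x : ℝ) : ℝ := x ^ 2 / 4 - muStar x


section Aux
open MeasureTheory Set



noncomputable def gpdf (t : ℝ) : ℝ := (Real.sqrt (2 * Real.pi))⁻¹ * Real.exp (-t ^ 2 / 2)

lemma gpdf_def (t : ℝ) : gpdf t = (Real.sqrt (2 * Real.pi))⁻¹ * Real.exp (-t ^ 2 / 2) := rfl

lemma gpdf_pos (t : ℝ) : 0 < gpdf t := by
  have h2pi : (0:ℝ) < 2 * Real.pi := by positivity
  exact mul_pos (inv_pos.2 (Real.sqrt_pos.2 h2pi)) (Real.exp_pos _)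

lemma continuous_gpdf : Continuous gpdf := by
  unfold gpdf; fun_prop

lemma integrable_gpdf : Integrable gpdf := by
  have h : Integrable (fun x : ℝ => Real.exp (-(1/2) * x ^ 2)) := integrable_exp_neg_mul_sq (by norm_num)
  have h2 := h.const_mul (Real.sqrt (2 * Real.pi))⁻¹
  refine h2.congr ?_
  filter_upwards with x
  unfold gpdf; ring_nf

lemma normCdf_eq (t : ℝ) : normCdf t = ∫ x in Set.Iic t, gpdf x := rfl

lemma integral_gpdf : ∫ x, gpdf x = 1 := by
  have h : ∫ x : ℝ, Real.exp (-(1/2) * x ^ 2) = Real.sqrt (Real.pi / (1/2)) :=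
    integral_gaussian (1/2)
  have h2 : ∫ x, gpdf x = (Real.sqrt (2 * Real.pi))⁻¹ * ∫ x : ℝ, Real.exp (-(1/2) * x ^ 2) := by
    rw [← integral_const_mul]
    congr 1 with x
    unfold gpdf; ring_nf
  rw [h2, h]
  have : Real.pi / (1/2) = 2 * Real.pi := by ring
  rw [this]
  have hpos : (0:ℝ) < Real.sqrt (2 * Real.pi) := Real.sqrt_pos.2 (by positivity)
  field_simp

lemma normCdf_zero : normCdf 0 = 1/2 := by
  have hneg : ∀ x:ℝ, gpdf (-x) = gpdf x := fun x => by unfold gpdf; ring_nf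
  have hsym : ∫ x in Set.Iic (0:ℝ), gpdf x = ∫ x in Set.Ioi (0:ℝ), gpdf x := by
    calc ∫ x in Set.Iic (0:ℝ), gpdf x = ∫ x in Set.Iic (0:ℝ), gpdf (-x) := by simp only [hneg]
      _ = ∫ x in Set.Ioi (-(0:ℝ)), gpdf x := integral_comp_neg_Iic 0 gpdf
      _ = ∫ x in Set.Ioi (0:ℝ), gpdf x := by norm_num
  have hadd : (∫ x in Set.Iic (0:ℝ), gpdf x) + ∫ x in Set.Ioi (0:ℝ), gpdf x = ∫ x, gpdf x :=
    intervalIntegral.integral_Iic_add_Ioi integrable_gpdf.integrableOn integrable_gpdf.integrableOn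
  rw [integral_gpdf, ← hsym] at hadd
  rw [normCdf_eq]
  linarith

lemma normCdf_sub (a b : ℝ) : normCdf b - normCdf a = ∫ x in a..b, gpdf x := by
  rw [normCdf_eq, normCdf_eq]
  exact intervalIntegral.integral_Iic_sub_Iic integrable_gpdf.integrableOn integrable_gpdf.integrableOn

lemma hasDerivAt_normCdf (t : ℝ) : HasDerivAt normCdf (gpdf t) t := by
  have h : HasDerivAt (fun u => ∫ x in (0:ℝ)..u, gpdf x) (gpdf t) t := by
    exact intervalIntegral.integral_hasDerivAt_right
      (continuous_gpdf.intervalIntegrable 0 t)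
      (continuous_gpdf.stronglyMeasurableAtFilter _ _)
      continuous_gpdf.continuousAt
  have : normCdf = fun u => normCdf 0 + ∫ x in (0:ℝ)..u, gpdf x := by
    funext u
    rw [← normCdf_sub 0 u]; ring
  rw [this]
  simpa using (h.const_add (normCdf 0))

lemma normCdf_pos (t : ℝ) : 0 < normCdf t := by
  rw [normCdf_eq]
  have h1 : ∫ x in (t-1)..t, gpdf x ≤ ∫ x in Set.Iic t, gpdf x := by
    rw [intervalIntegral.integral_of_le (by linarith)]
    apply setIntegral_mono_set integrable_gpdf.integrableOn
      (Filter.Eventually.of_forall fun x => (gpdf_pos x).le)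
    filter_upwards with x hx
    exact hx.2
  have h2 : 0 < ∫ x in (t-1)..t, gpdf x := by
    apply intervalIntegral.intervalIntegral_pos_of_pos_on
      (continuous_gpdf.intervalIntegrable _ _)
      (fun x _ => gpdf_pos x) (by linarith)
  linarith

lemma normCdf_mono : Monotone normCdf := by
  intro a b hab
  have := normCdf_sub a b
  have h2 : 0 ≤ ∫ x in a..b, gpdf x :=
    intervalIntegral.integral_nonneg hab (fun x _ => (gpdf_pos x).le)
  linarith

lemma normCdf_le_one (t : ℝ) : normCdf t ≤ 1 := by
  rw [normCdf_eq, ← integral_gpdf]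
  apply setIntegral_le_integral integrable_gpdf
    (Filter.Eventually.of_forall fun x => (gpdf_pos x).le)

lemma normCdf_half_le (t : ℝ) (ht : 0 ≤ t) : 1/2 ≤ normCdf t := by
  rw [← normCdf_zero]; exact normCdf_mono ht

-- assume from chunk 1:

noncomputable def hz (t : ℝ) : ℝ := gpdf t / normCdf t

lemma hz_pos (t : ℝ) : 0 < hz t := div_pos (gpdf_pos t) (normCdf_pos t)

lemma sqrt2pi_ge : (2.5:ℝ) ≤ Real.sqrt (2 * Real.pi) := by
  have h : (2.5:ℝ) = Real.sqrt 6.25 := by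
    rw [show (6.25:ℝ) = 2.5^2 by norm_num, Real.sqrt_sq (by norm_num)]
  rw [h]
  apply Real.sqrt_le_sqrt
  nlinarith [Real.pi_gt_d6]

lemma gpdf_le (t : ℝ) : gpdf t ≤ Real.exp (-t^2/2) / 2.5 := by
  rw [gpdf_def, inv_mul_eq_div, div_le_div_iff₀ (by positivity) (by norm_num)]
  nlinarith [sqrt2pi_ge, Real.exp_pos (-t^2/2)]

lemma hz_le (t : ℝ) (ht : 0 ≤ t) : hz t ≤ 2 * gpdf t := by
  unfold hz
  rw [div_le_iff₀ (normCdf_pos t)]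
  have := normCdf_half_le t ht
  nlinarith [gpdf_pos t]

lemma hasDerivAt_gpdf (t : ℝ) : HasDerivAt gpdf (-t * gpdf t) t := by
  have h1 : HasDerivAt (fun u : ℝ => -u^2/2) (-t) t := by
    have h := ((hasDerivAt_pow 2 t).neg).div_const 2
    refine h.congr_deriv ?_
    simp only [Nat.cast_ofNat, Nat.reduceSub, pow_one]
    ring
  have h2 : HasDerivAt (fun u : ℝ => (Real.sqrt (2 * Real.pi))⁻¹ * Real.exp (-u^2/2))
      ((Real.sqrt (2 * Real.pi))⁻¹ * (Real.exp (-t^2/2) * (-t))) t :=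
    (h1.exp).const_mul _
  have heq : gpdf = fun u : ℝ => (Real.sqrt (2 * Real.pi))⁻¹ * Real.exp (-u^2/2) :=
    funext fun u => gpdf_def u
  rw [heq]
  convert h2 using 1
  rw [show (-t * (fun u : ℝ => (Real.sqrt (2 * Real.pi))⁻¹ * Real.exp (-u^2/2)) t) = -t * ((Real.sqrt (2 * Real.pi))⁻¹ * Real.exp (-t^2/2)) from rfl]
  ring

lemma hasDerivAt_hz (t : ℝ) : HasDerivAt hz (-(t * hz t + (hz t)^2)) t := by
  have h := (hasDerivAt_gpdf t).div (hasDerivAt_normCdf t) (normCdf_pos t).ne'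
  have heq : (-t * gpdf t * normCdf t - gpdf t * gpdf t) / normCdf t ^ 2
      = -(t * hz t + (hz t)^2) := by
    have hn := (normCdf_pos t).ne'
    unfold hz
    field_simp
    ring
  rw [heq] at h
  exact h


set_option maxHeartbeats 2000000 in
lemma master (t : ℝ) (ht : 0 ≤ t) : t * hz t + (hz t)^2 ≤ 39/41 := by
  obtain ⟨E, hE⟩ : ∃ E, E = Real.exp (-t^2/2) := ⟨_, rfl⟩
  have hEpos : 0 < E := hE ▸ Real.exp_pos _
  have hg : gpdf t ≤ E / 2.5 := hE ▸ gpdf_le t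
  have hh : hz t ≤ 2 * (E / 2.5) := (hz_le t ht).trans (by linarith)
  have hhpos := hz_pos t
  have key : t * (2 * (E/2.5)) + (2 * (E/2.5))^2 ≤ 39/41 := by
    rcases le_or_gt t 1 with h1 | h1
    · -- E * (1 + t^2/2) ≤ 1
      have hexp : 1 + t^2/2 ≤ Real.exp (t^2/2) := by
        have := Real.add_one_le_exp (t^2/2)
        linarith
      have hEinv : E * (1 + t^2/2) ≤ 1 := by
        rw [hE, show -t^2/2 = -(t^2/2) by ring, Real.exp_neg]
        rw [inv_mul_le_iff₀ (Real.exp_pos _)]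
        simpa using hexp
      set q := 1 + t^2/2 with hq
      have hqpos : (1:ℝ) ≤ q := by rw [hq]; nlinarith [sq_nonneg t]
      -- t * 0.8 * E + 0.64 E^2 ≤ 39/41 given E*q ≤ 1, i.e. E ≤ 1/q
      have hE2 : E ≤ 1/q := by rw [le_div_iff₀ (by linarith)]; linarith
      have hE2' : E^2 ≤ 1/q^2 := by
        rw [le_div_iff₀ (by positivity), ← mul_pow]
        nlinarith [hEinv, mul_pos hEpos (show (0:ℝ) < q by linarith)]
      have poly : (0.8 * t) * q + 0.64 ≤ (39/41) * q^2 := by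
        rw [hq]
        nlinarith [sq_nonneg (t - 1/2), sq_nonneg (t-1), mul_nonneg ht (sub_nonneg.2 h1), sq_nonneg t, sq_nonneg (t*(t-1)), mul_nonneg (mul_nonneg ht ht) (sub_nonneg.2 h1)]
      have : t * (2 * (E/2.5)) + (2 * (E/2.5))^2 = (0.8*t) * E + 0.64 * E^2 := by ring
      rw [this]
      have c1 : (0.8*t) * E ≤ (0.8*t)/q := by
        rw [div_eq_mul_one_div]
        exact mul_le_mul_of_nonneg_left hE2 (by linarith)
      have c2 : 0.64 * E^2 ≤ 0.64 / q^2 := by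
        rw [div_eq_mul_one_div]
        exact mul_le_mul_of_nonneg_left hE2' (by norm_num)
      have c3 : (0.8*t)/q + 0.64/q^2 ≤ 39/41 := by
        rw [div_add_div _ _ (by positivity : q ≠ 0) (by positivity : q^2 ≠ 0), div_le_iff₀ (by positivity)]
        have hqq : q * q^2 = q^3 := by ring
        nlinarith [poly, sq_nonneg q, mul_le_mul_of_nonneg_left poly (le_of_lt (by positivity : (0:ℝ) < q))]
      linarith
    · -- t ≥ 1
      have he : (2.7:ℝ) < Real.exp 1 := by
        have := Real.exp_one_gt_d9
        linarith
      have hmono : E ≤ Real.exp (-(t/2)) := by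
        rw [hE]
        apply Real.exp_le_exp.2
        nlinarith
      have h2 : t/2 ≤ Real.exp (t/2 - 1) := by
        have := Real.add_one_le_exp (t/2 - 1)
        linarith
      have h4 : Real.exp 1 * (t/2) ≤ Real.exp (t/2) := by
        have hre : Real.exp (t/2) = Real.exp 1 * Real.exp (t/2 - 1) := by
          rw [← Real.exp_add]; ring_nf
        rw [hre]
        exact mul_le_mul_of_nonneg_left h2 (Real.exp_pos 1).le
      have h3 : t * Real.exp (-(t/2)) ≤ 2 / Real.exp 1 := by
        have hrw : t * Real.exp (-(t/2)) = t / Real.exp (t/2) := by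
          rw [Real.exp_neg]; ring
        rw [hrw, div_le_div_iff₀ (Real.exp_pos _) (Real.exp_pos _)]
        linarith
      have h1' : t * E ≤ 2 / Real.exp 1 := by
        calc t * E ≤ t * Real.exp (-(t/2)) := by nlinarith
          _ ≤ 2 / Real.exp 1 := h3
      have hE1 : E^2 ≤ 1 / Real.exp 1 := by
        have hsq : E^2 = Real.exp (-t^2) := by
          rw [hE, sq, ← Real.exp_add]
          congr 1; ring
        have hcm : Real.exp (-t^2) ≤ Real.exp (-1) := Real.exp_le_exp.2 (by nlinarith)
        rw [hsq]
        calc Real.exp (-t^2) ≤ Real.exp (-1) := hcm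
          _ = (Real.exp 1)⁻¹ := by rw [Real.exp_neg]
          _ = 1 / Real.exp 1 := by rw [one_div]
      have hinv : 1/Real.exp 1 ≤ 1/2.7 := by
        rw [div_le_div_iff₀ (Real.exp_pos 1) (by norm_num)]
        linarith
      have e1 : t * E ≤ 2/2.7 := by
        calc t * E ≤ 2 / Real.exp 1 := h1'
          _ = 2 * (1/Real.exp 1) := by ring
          _ ≤ 2 * (1/2.7) := by linarith
          _ = 2/2.7 := by ring
      have e2 : E^2 ≤ 1/2.7 := hE1.trans hinv
      have expand : t * (2 * (E/2.5)) + (2 * (E/2.5))^2 = 0.8*(t*E) + 0.64 * E^2 := by ring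
      rw [expand]
      linarith [e1, e2]
  nlinarith [mul_le_mul_of_nonneg_left hh ht, hhpos, hEpos]






noncomputable abbrev x0 : ℝ := Real.sqrt (2 / Real.pi)

lemma x0_eq : x0 = 2 / Real.sqrt (2 * Real.pi) := by
  have h2pi : (0:ℝ) < 2 * Real.pi := by positivity
  have hs : (0:ℝ) < Real.sqrt (2 * Real.pi) := Real.sqrt_pos.2 h2pi
  rw [eq_div_iff hs.ne']
  rw [← Real.sqrt_mul (by positivity : (0:ℝ) ≤ 2 / Real.pi)]
  rw [show 2 / Real.pi * (2 * Real.pi) = 4 by field_simp; ring]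
  rw [show (4:ℝ) = 2^2 by norm_num, Real.sqrt_sq (by norm_num)]

lemma x0_pos : 0 < x0 := Real.sqrt_pos.2 (by positivity)

lemma hz_zero : hz 0 = x0 := by
  unfold hz
  rw [normCdf_zero, gpdf_def, x0_eq]
  norm_num
  rw [inv_eq_one_div]
  ring

lemma continuous_hz : Continuous hz :=
  continuous_iff_continuousAt.2 fun t => (hasDerivAt_hz t).continuousAt

lemma hz_anti {a b : ℝ} (ha : 0 ≤ a) (hab : a ≤ b) : hz b ≤ hz a := by
  unfold hz
  have hgb : gpdf b ≤ gpdf a := by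
    rw [gpdf_def, gpdf_def]
    apply mul_le_mul_of_nonneg_left _ (by positivity)
    apply Real.exp_le_exp.2
    nlinarith
  exact div_le_div₀ (gpdf_pos a).le hgb (normCdf_pos a) (normCdf_mono hab)

lemma hz_lip {a b : ℝ} (ha : 0 ≤ a) (hab : a ≤ b) : hz a - hz b ≤ (39/41) * (b - a) := by
  set g : ℝ → ℝ := fun t => hz t + (39/41) * t with hg
  have hd : ∀ t : ℝ, HasDerivAt g (-(t * hz t + (hz t)^2) + 39/41) t := fun t =>
    (hasDerivAt_hz t).add ((hasDerivAt_id t).const_mul (39/41) |>.congr_deriv (by ring))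
  have hmono : MonotoneOn g (Ici 0) := by
    apply monotoneOn_of_deriv_nonneg (convex_Ici 0)
    · exact fun t _ => ((hd t).continuousAt).continuousWithinAt
    · intro t ht
      exact ((hd t).differentiableAt).differentiableWithinAt
    · intro t ht
      rw [(hd t).deriv]
      rw [interior_Ici] at ht
      have := master t (le_of_lt ht)
      linarith
  have := hmono ha (le_trans ha hab) hab
  simp only [hg] at this
  linarith

noncomputable def Ff : ℝ → ℝ := fun t => t + hz t

lemma F_zero : Ff 0 = x0 := by simp [Ff, hz_zero]

lemma continuous_F : Continuous Ff := continuous_id.add continuous_hz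

lemma F_lip {a b : ℝ} (ha : 0 ≤ a) (hab : a ≤ b) : Ff b - Ff a ≤ b - a := by
  have := hz_anti ha hab
  simp only [Ff]
  linarith

lemma F_exp {a b : ℝ} (ha : 0 ≤ a) (hab : a ≤ b) : (2/41) * (b - a) ≤ Ff b - Ff a := by
  have := hz_lip ha hab
  simp only [Ff]
  linarith

lemma F_mono {a b : ℝ} (ha : 0 ≤ a) (hab : a ≤ b) : Ff a ≤ Ff b := by
  have h1 := F_exp ha hab
  have h2 : (0:ℝ) ≤ 2/41 * (b - a) := mul_nonneg (by norm_num) (sub_nonneg.2 hab)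
  linarith

lemma exists_L (x : ℝ) (hx : x0 ≤ x) : ∃ l, 0 ≤ l ∧ Ff l = x := by
  have hx0 : (0:ℝ) ≤ x := le_trans x0_pos.le hx
  have h1 : x ∈ Icc (Ff 0) (Ff x) := by
    constructor
    · rw [F_zero]; exact hx
    · simp only [Ff]; linarith [hz_pos x]
  have h2 := intermediate_value_Icc hx0 (continuous_F.continuousOn (s := Icc 0 x)) h1
  obtain ⟨l, hl, hfl⟩ := h2
  exact ⟨l, hl.1, hfl⟩

noncomputable def Lf (x : ℝ) : ℝ :=
  if hx : x0 ≤ x then (exists_L x hx).choose else 0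

lemma Lf_nonneg {x : ℝ} (hx : x0 ≤ x) : 0 ≤ Lf x := by
  rw [Lf, dif_pos hx]; exact (exists_L x hx).choose_spec.1

lemma F_Lf {x : ℝ} (hx : x0 ≤ x) : Ff (Lf x) = x := by
  rw [Lf, dif_pos hx]; exact (exists_L x hx).choose_spec.2

lemma Lf_mono_exp {x y : ℝ} (hx : x0 ≤ x) (hxy : x ≤ y) : y - x ≤ Lf y - Lf x := by
  have hy : x0 ≤ y := le_trans hx hxy
  rcases le_total (Lf x) (Lf y) with h | h
  · have := F_lip (Lf_nonneg hx) h
    rw [F_Lf hx, F_Lf hy] at this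
    linarith
  · have := F_mono (Lf_nonneg hy) h
    rw [F_Lf hx, F_Lf hy] at this
    have hxy' : x = y := le_antisymm hxy this
    subst hxy'
    simp

lemma Lf_lip {x y : ℝ} (hx : x0 ≤ x) (hxy : x ≤ y) : Lf y - Lf x ≤ (41/2) * (y - x) := by
  have hy : x0 ≤ y := le_trans hx hxy
  rcases le_total (Lf x) (Lf y) with h | h
  · have := F_exp (Lf_nonneg hx) h
    rw [F_Lf hx, F_Lf hy] at this
    linarith
  · have h2 : (0:ℝ) ≤ 41/2 * (y - x) := mul_nonneg (by norm_num) (sub_nonneg.2 hxy)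
    linarith

lemma Lf_abs {x y : ℝ} (hx : x0 ≤ x) (hy : x0 ≤ y) : |Lf y - Lf x| ≤ (41/2) * |y - x| := by
  rcases le_total x y with h | h
  · rw [abs_of_nonneg (by linarith [Lf_mono_exp hx h]), abs_of_nonneg (by linarith)]
    exact Lf_lip hx h
  · rw [abs_sub_comm, abs_sub_comm y x]
    rw [abs_of_nonneg (by linarith [Lf_mono_exp hy h]), abs_of_nonneg (by linarith)]
    exact Lf_lip hy h

lemma hasDerivAt_phiFn (l : ℝ) : HasDerivAt phiFn (hz l) l := by
  have h1 : HasDerivAt (fun t => 2 * normCdf t) (2 * gpdf l) l :=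
    (hasDerivAt_normCdf l).const_mul 2
  have h2 : (2 : ℝ) * normCdf l ≠ 0 := by
    have := normCdf_pos l
    positivity
  have h3 := h1.log h2
  have : 2 * gpdf l / (2 * normCdf l) = hz l := by
    unfold hz
    have := (normCdf_pos l).ne'
    field_simp
  rw [this] at h3
  exact h3

noncomputable def gfn (x l : ℝ) : ℝ := l * x - l^2/2 - phiFn l

lemma hasDerivAt_gfn (x l : ℝ) : HasDerivAt (gfn x) (x - Ff l) l := by
  have h1 : HasDerivAt (fun l : ℝ => l * x) x l := by
    simpa using (hasDerivAt_id l).mul_const x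
  have h2 : HasDerivAt (fun l : ℝ => l^2/2) l l := by
    have := (hasDerivAt_pow 2 l).div_const 2
    refine this.congr_deriv ?_
    simp only [Nat.cast_ofNat, Nat.reduceSub, pow_one]; ring
  have h3 := (h1.sub h2).sub (hasDerivAt_phiFn l)
  have : x - l - hz l = x - Ff l := by simp [Ff]; ring
  rw [this] at h3
  exact h3

lemma gfn_le {x : ℝ} (hx : x0 ≤ x) {l : ℝ} (hl : 0 ≤ l) : gfn x l ≤ gfn x (Lf x) := by
  rcases le_total l (Lf x) with h | h
  · have hmono : MonotoneOn (gfn x) (Icc l (Lf x)) := by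
      apply monotoneOn_of_deriv_nonneg (convex_Icc _ _)
      · exact fun t _ => (hasDerivAt_gfn x t).continuousAt.continuousWithinAt
      · exact fun t _ => (hasDerivAt_gfn x t).differentiableAt.differentiableWithinAt
      · intro t ht
        rw [(hasDerivAt_gfn x t).deriv]
        rw [interior_Icc] at ht
        have hFt : Ff t ≤ Ff (Lf x) := F_mono (le_trans hl ht.1.le) ht.2.le
        rw [F_Lf hx] at hFt
        linarith
    exact hmono ⟨le_refl l, h⟩ ⟨h, le_refl _⟩ h
  · have hmono : AntitoneOn (gfn x) (Icc (Lf x) l) := by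
      apply antitoneOn_of_deriv_nonpos (convex_Icc _ _)
      · exact fun t _ => (hasDerivAt_gfn x t).continuousAt.continuousWithinAt
      · exact fun t _ => (hasDerivAt_gfn x t).differentiableAt.differentiableWithinAt
      · intro t ht
        rw [(hasDerivAt_gfn x t).deriv]
        rw [interior_Icc] at ht
        have hFt : Ff (Lf x) ≤ Ff t := F_mono (Lf_nonneg hx) ht.1.le
        rw [F_Lf hx] at hFt
        linarith
    exact hmono ⟨le_refl _, h⟩ ⟨h, le_refl l⟩ h

lemma bddAbove_gfn {x : ℝ} (hx : x0 ≤ x) :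
    BddAbove (Set.range fun l : {l : ℝ // 0 ≤ l} => ((l:ℝ) * x - (l:ℝ)^2/2 - phiFn l)) := by
  refine ⟨gfn x (Lf x), ?_⟩
  rintro _ ⟨⟨l, hl⟩, rfl⟩
  exact gfn_le hx hl

lemma muStar_eq {x : ℝ} (hx : x0 ≤ x) : muStar x = gfn x (Lf x) := by
  unfold muStar
  apply le_antisymm
  · exact ciSup_le fun ⟨l, hl⟩ => gfn_le hx hl
  · exact le_ciSup (bddAbove_gfn hx) ⟨Lf x, Lf_nonneg hx⟩

lemma subgrad {a b : ℝ} (ha : x0 ≤ a) (hb : x0 ≤ b) :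
    muStar a + (b - a) * Lf a ≤ muStar b := by
  have h1 : gfn b (Lf a) ≤ muStar b := by
    rw [muStar_eq hb]
    exact gfn_le hb (Lf_nonneg ha)
  rw [muStar_eq ha]
  unfold gfn at *
  linarith [h1]

section tele
variable {u w : ℝ} (hu : x0 ≤ u) (huw : u ≤ w) {n : ℕ} (hn : 1 ≤ n)

lemma tele_aux (hu : x0 ≤ u) (huw : u ≤ w) (hn : 1 ≤ n) :
    True := trivial

lemma tele1 (hu : x0 ≤ u) (huw : u ≤ w) (hn : 1 ≤ n) :
    muStar u + (w-u)*Lf u + (w-u)^2/2 - (w-u)^2/(2*n) ≤ muStar w := by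
  have hn0 : (0:ℝ) < n := by exact_mod_cast hn
  set d := w - u with hd
  have hd0 : 0 ≤ d := by linarith
  set δ := d / n with hδdef
  have hδ : 0 ≤ δ := by positivity
  have hnδ : (n:ℝ) * δ = d := by rw [hδdef, mul_comm, div_mul_cancel₀ _ hn0.ne']
  set p : ℕ → ℝ := fun k => u + k * δ with hp
  have hpmem : ∀ k : ℕ, x0 ≤ p k := fun k => by
    have : (0:ℝ) ≤ k * δ := by positivity
    simp only [hp]; linarith
  have hpsucc : ∀ k : ℕ, p (k+1) - p k = δ := fun k => by
    simp only [hp]; push_cast; ring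
  have hple : ∀ k : ℕ, k ≤ n → p k ≤ w := fun k hk => by
    have : (k:ℝ) * δ ≤ n * δ := by
      apply mul_le_mul_of_nonneg_right _ hδ
      exact_mod_cast hk
    simp only [hp]; rw [hd] at *; linarith
  have hpn : p n = w := by
    simp only [hp]
    rw [hnδ, hd]; ring
  have claim : ∀ k : ℕ, k ≤ n →
      muStar u + (k:ℝ)*δ*Lf u + δ^2*((k:ℝ)*((k:ℝ)-1))/2 ≤ muStar (p k) := by
    intro k
    induction k with
    | zero =>
      intro _
      simp only [hp]
      norm_num
    | succ k ih =>
      intro hk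
      have hk' : k ≤ n := Nat.le_of_succ_le hk
      have h1 := ih hk'
      have h2 : muStar (p k) + δ * Lf (p k) ≤ muStar (p (k+1)) := by
        have hs := subgrad (hpmem k) (hpmem (k+1))
        rw [hpsucc k] at hs
        linarith
      have h3 : Lf u + (k:ℝ)*δ ≤ Lf (p k) := by
        have := Lf_mono_exp hu (show u ≤ p k by
          have hkδ : (0:ℝ) ≤ (k:ℝ)*δ := by positivity
          simp only [hp]; linarith)
        have hpk : p k - u = (k:ℝ)*δ := by simp only [hp]; ring
        rw [hpk] at this
        linarith
      have h4 : δ * (Lf u + (k:ℝ)*δ) ≤ δ * Lf (p k) :=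
        mul_le_mul_of_nonneg_left h3 hδ
      push_cast
      nlinarith [h1, h2, h4]
  have hfin := claim n (le_refl n)
  rw [hpn] at hfin
  have harr2 : δ^2*((n:ℝ)*((n:ℝ)-1))/2 = d^2/2 - d^2/(2*n) := by
    rw [hδdef]
    field_simp [hn0.ne']
  calc muStar u + d*Lf u + d^2/2 - d^2/(2*n)
      = muStar u + ((n:ℝ)*δ)*Lf u + δ^2*((n:ℝ)*((n:ℝ)-1))/2 := by rw [hnδ, harr2]; ring
    _ ≤ muStar w := by rw [show (n:ℝ)*δ*Lf u = (n:ℝ)*δ*Lf u from rfl]; linarith [hfin]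

end tele

lemma tele2 {u w : ℝ} {n : ℕ} (hu : x0 ≤ u) (huw : u ≤ w) (hn : 1 ≤ n) :
    muStar w ≤ muStar u + (w-u)*Lf u + (41/4)*(w-u)^2 + (41/4)*(w-u)^2/n := by
  have hn0 : (0:ℝ) < n := by exact_mod_cast hn
  set d := w - u with hd
  have hd0 : 0 ≤ d := by linarith
  set δ := d / n with hδdef
  have hδ : 0 ≤ δ := by positivity
  have hnδ : (n:ℝ) * δ = d := by rw [hδdef, mul_comm, div_mul_cancel₀ _ hn0.ne']
  set p : ℕ → ℝ := fun k => u + k * δ with hp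
  have hpmem : ∀ k : ℕ, x0 ≤ p k := fun k => by
    have : (0:ℝ) ≤ k * δ := by positivity
    simp only [hp]; linarith
  have hpsucc : ∀ k : ℕ, p (k+1) - p k = δ := fun k => by
    simp only [hp]; push_cast; ring
  have claim : ∀ k : ℕ, k ≤ n →
      muStar (p k) ≤ muStar u + (k:ℝ)*δ*Lf u + (41/2)*δ^2*((k:ℝ)*((k:ℝ)+1))/2 := by
    intro k
    induction k with
    | zero =>
      intro _
      simp only [hp]
      norm_num
    | succ k ih =>
      intro hk
      have hk' : k ≤ n := Nat.le_of_succ_le hk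
      have h1 := ih hk'
      have h2 : muStar (p (k+1)) ≤ muStar (p k) + δ * Lf (p (k+1)) := by
        have hs := subgrad (hpmem (k+1)) (hpmem k)
        have hneg : p k - p (k+1) = -δ := by have := hpsucc k; linarith
        rw [hneg] at hs
        have : (-δ) * Lf (p (k+1)) = -(δ * Lf (p (k+1))) := by ring
        rw [this] at hs
        linarith
      have h3 : Lf (p (k+1)) ≤ Lf u + (41/2)*(((k:ℝ)+1)*δ) := by
        have hle : u ≤ p (k+1) := by
          have hkδ : (0:ℝ) ≤ ((k:ℕ)+1 : ℕ) * δ := by positivity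
          simp only [hp]; push_cast at hkδ ⊢; linarith
        have := Lf_lip hu hle
        have hpk : p (k+1) - u = ((k:ℝ)+1)*δ := by simp only [hp]; push_cast; ring
        rw [hpk] at this
        linarith
      have h4 : δ * Lf (p (k+1)) ≤ δ * (Lf u + (41/2)*(((k:ℝ)+1)*δ)) :=
        mul_le_mul_of_nonneg_left h3 hδ
      push_cast
      nlinarith [h1, h2, h4]
  have hpn : p n = w := by
    simp only [hp]
    rw [hnδ, hd]; ring
  have hfin := claim n (le_refl n)
  rw [hpn] at hfin
  have harr2 : (41/2)*δ^2*((n:ℝ)*((n:ℝ)+1))/2 = (41/4)*d^2 + (41/4)*d^2/n := by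
    rw [hδdef]
    field_simp [hn0.ne']
    ring
  calc muStar w ≤ muStar u + (n:ℝ)*δ*Lf u + (41/2)*δ^2*((n:ℝ)*((n:ℝ)+1))/2 := hfin
    _ = muStar u + d*Lf u + (41/4)*d^2 + (41/4)*d^2/n := by rw [hnδ, harr2]; ring

lemma tele3 {u w : ℝ} {n : ℕ} (hu : x0 ≤ u) (huw : u ≤ w) (hn : 1 ≤ n) :
    muStar w ≤ muStar u + (w-u)*Lf w - (w-u)^2/2 + (w-u)^2/(2*n) := by
  have hn0 : (0:ℝ) < n := by exact_mod_cast hn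
  set d := w - u with hd
  have hd0 : 0 ≤ d := by linarith
  set δ := d / n with hδdef
  have hδ : 0 ≤ δ := by positivity
  have hnδ : (n:ℝ) * δ = d := by rw [hδdef, mul_comm, div_mul_cancel₀ _ hn0.ne']
  set p : ℕ → ℝ := fun k => u + k * δ with hp
  have hpmem : ∀ k : ℕ, x0 ≤ p k := fun k => by
    have : (0:ℝ) ≤ k * δ := by positivity
    simp only [hp]; linarith
  have hpsucc : ∀ k : ℕ, p (k+1) - p k = δ := fun k => by
    simp only [hp]; push_cast; ring
  have hple : ∀ k : ℕ, k ≤ n → p k ≤ w := fun k hk => by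
    have : (k:ℝ) * δ ≤ n * δ := by
      apply mul_le_mul_of_nonneg_right _ hδ
      exact_mod_cast hk
    simp only [hp]; rw [hd] at *; linarith
  have hw : x0 ≤ w := le_trans hu huw
  have claim : ∀ k : ℕ, k ≤ n →
      muStar (p k) ≤ muStar u + (k:ℝ)*δ*Lf w - δ^2*((k:ℝ)*(n:ℝ) - (k:ℝ)*((k:ℝ)+1)/2) := by
    intro k
    induction k with
    | zero =>
      intro _
      simp only [hp]
      norm_num
    | succ k ih =>
      intro hk
      have hk' : k ≤ n := Nat.le_of_succ_le hk
      have h1 := ih hk'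
      have h2 : muStar (p (k+1)) ≤ muStar (p k) + δ * Lf (p (k+1)) := by
        have hs := subgrad (hpmem (k+1)) (hpmem k)
        have hneg : p k - p (k+1) = -δ := by have := hpsucc k; linarith
        rw [hneg] at hs
        have : (-δ) * Lf (p (k+1)) = -(δ * Lf (p (k+1))) := by ring
        rw [this] at hs
        linarith
      have h3 : Lf (p (k+1)) ≤ Lf w - ((n:ℝ)-((k:ℝ)+1))*δ := by
        have hle : p (k+1) ≤ w := hple (k+1) hk
        have := Lf_mono_exp (hpmem (k+1)) hle
        have hpk : w - p (k+1) = ((n:ℝ)-((k:ℝ)+1))*δ := by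
          simp only [hp]; push_cast
          have : d = (n:ℝ)*δ := hnδ.symm
          rw [hd] at this
          linarith [this]
        rw [hpk] at this
        linarith
      have h4 : δ * Lf (p (k+1)) ≤ δ * (Lf w - ((n:ℝ)-((k:ℝ)+1))*δ) :=
        mul_le_mul_of_nonneg_left h3 hδ
      push_cast
      nlinarith [h1, h2, h4]
  have hpn : p n = w := by
    simp only [hp]
    rw [hnδ, hd]; ring
  have hfin := claim n (le_refl n)
  rw [hpn] at hfin
  have harr2 : δ^2*((n:ℝ)*(n:ℝ) - (n:ℝ)*((n:ℝ)+1)/2) = d^2/2 - d^2/(2*n) := by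
    rw [hδdef]
    field_simp [hn0.ne']
    ring
  calc muStar w ≤ muStar u + (n:ℝ)*δ*Lf w - δ^2*((n:ℝ)*(n:ℝ) - (n:ℝ)*((n:ℝ)+1)/2) := hfin
    _ = muStar u + d*Lf w - d^2/2 + d^2/(2*n) := by rw [hnδ, harr2]; ring

lemma tele4 {u w : ℝ} {n : ℕ} (hu : x0 ≤ u) (huw : u ≤ w) (hn : 1 ≤ n) :
    muStar u + (w-u)*Lf w - (41/4)*(w-u)^2 - (41/4)*(w-u)^2/n ≤ muStar w := by
  have hn0 : (0:ℝ) < n := by exact_mod_cast hn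
  set d := w - u with hd
  have hd0 : 0 ≤ d := by linarith
  set δ := d / n with hδdef
  have hδ : 0 ≤ δ := by positivity
  have hnδ : (n:ℝ) * δ = d := by rw [hδdef, mul_comm, div_mul_cancel₀ _ hn0.ne']
  set p : ℕ → ℝ := fun k => u + k * δ with hp
  have hpmem : ∀ k : ℕ, x0 ≤ p k := fun k => by
    have : (0:ℝ) ≤ k * δ := by positivity
    simp only [hp]; linarith
  have hpsucc : ∀ k : ℕ, p (k+1) - p k = δ := fun k => by
    simp only [hp]; push_cast; ring
  have hple : ∀ k : ℕ, k ≤ n → p k ≤ w := fun k hk => by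
    have : (k:ℝ) * δ ≤ n * δ := by
      apply mul_le_mul_of_nonneg_right _ hδ
      exact_mod_cast hk
    simp only [hp]; rw [hd] at *; linarith
  have hw : x0 ≤ w := le_trans hu huw
  have claim : ∀ k : ℕ, k ≤ n →
      muStar u + (k:ℝ)*δ*Lf w - (41/2)*δ^2*((k:ℝ)*(n:ℝ) - (k:ℝ)*((k:ℝ)-1)/2) ≤ muStar (p k) := by
    intro k
    induction k with
    | zero =>
      intro _
      simp only [hp]
      norm_num
    | succ k ih =>
      intro hk
      have hk' : k ≤ n := Nat.le_of_succ_le hk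
      have h1 := ih hk'
      have h2 : muStar (p k) + δ * Lf (p k) ≤ muStar (p (k+1)) := by
        have hs := subgrad (hpmem k) (hpmem (k+1))
        rw [hpsucc k] at hs
        linarith
      have h3 : Lf w - (41/2)*(((n:ℝ)-(k:ℝ))*δ) ≤ Lf (p k) := by
        have hle : p k ≤ w := hple k hk'
        have := Lf_lip (hpmem k) hle
        have hpk : w - p k = ((n:ℝ)-(k:ℝ))*δ := by
          simp only [hp]
          have : d = (n:ℝ)*δ := hnδ.symm
          rw [hd] at this
          linarith [this]
        rw [hpk] at this
        linarith
      have h4 : δ * (Lf w - (41/2)*(((n:ℝ)-(k:ℝ))*δ)) ≤ δ * Lf (p k) :=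
        mul_le_mul_of_nonneg_left h3 hδ
      push_cast
      nlinarith [h1, h2, h4]
  have hpn : p n = w := by
    simp only [hp]
    rw [hnδ, hd]; ring
  have hfin := claim n (le_refl n)
  rw [hpn] at hfin
  have harr2 : (41/2)*δ^2*((n:ℝ)*(n:ℝ) - (n:ℝ)*((n:ℝ)-1)/2) = (41/4)*d^2 + (41/4)*d^2/n := by
    rw [hδdef]
    field_simp [hn0.ne']
    ring
  calc muStar u + d*Lf w - (41/4)*d^2 - (41/4)*d^2/n
      = muStar u + (n:ℝ)*δ*Lf w - (41/2)*δ^2*((n:ℝ)*(n:ℝ) - (n:ℝ)*((n:ℝ)-1)/2) := by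
        rw [hnδ, harr2]; ring
    _ ≤ muStar w := hfin



lemma helperlim {A B C : ℝ} (hC : 0 ≤ C) (h : ∀ n : ℕ, 1 ≤ n → A ≤ B + C/n) : A ≤ B := by
  by_contra hc
  push_neg at hc
  have hAB : 0 < A - B := by linarith
  obtain ⟨n, hn⟩ := exists_nat_gt (max 1 (C/(A-B)))
  have h1n : (1:ℝ) < n := lt_of_le_of_lt (le_max_left _ _) hn
  have hn1 : 1 ≤ n := by exact_mod_cast h1n.le
  have hn0 : (0:ℝ) < n := by linarith
  have hCn : C/(A-B) < n := lt_of_le_of_lt (le_max_right _ _) hn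
  have hlt : C < (A-B)*n := by rw [div_lt_iff₀ hAB] at hCn; linarith
  have h2 := h n hn1
  have h3 : (A-B)*n ≤ C := by
    rw [← le_div_iff₀ hn0]
    linarith
  linarith

lemma bound1 {u w : ℝ} (hu : x0 ≤ u) (huw : u ≤ w) :
    muStar u + (w-u)*Lf u + (w-u)^2/2 ≤ muStar w := by
  apply helperlim (show (0:ℝ) ≤ (w-u)^2/2 by positivity)
  intro n hn
  have := tele1 hu huw hn
  have heq : (w-u)^2/(2*(n:ℝ)) = ((w-u)^2/2)/n := by ring
  linarith [heq ▸ this]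

lemma bound2 {u w : ℝ} (hu : x0 ≤ u) (huw : u ≤ w) :
    muStar w ≤ muStar u + (w-u)*Lf u + (41/4)*(w-u)^2 := by
  apply helperlim (show (0:ℝ) ≤ (41/4)*(w-u)^2 by positivity)
  intro n hn
  have := tele2 hu huw hn
  have heq : (41/4)*(w-u)^2/(n:ℝ) = ((41/4)*(w-u)^2)/n := by ring
  linarith [heq ▸ this]

lemma bound3 {u w : ℝ} (hu : x0 ≤ u) (huw : u ≤ w) :
    muStar w ≤ muStar u + (w-u)*Lf w - (w-u)^2/2 := by
  apply helperlim (show (0:ℝ) ≤ (w-u)^2/2 by positivity)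
  intro n hn
  have := tele3 hu huw hn
  have heq : (w-u)^2/(2*(n:ℝ)) = ((w-u)^2/2)/n := by ring
  linarith [heq ▸ this]

lemma bound4 {u w : ℝ} (hu : x0 ≤ u) (huw : u ≤ w) :
    muStar u + (w-u)*Lf w - (41/4)*(w-u)^2 ≤ muStar w := by
  apply helperlim (show (0:ℝ) ≤ (41/4)*(w-u)^2 by positivity)
  intro n hn
  have := tele4 hu huw hn
  have heq : (41/4)*(w-u)^2/(n:ℝ) = ((41/4)*(w-u)^2)/n := by ring
  linarith [heq ▸ this]

lemma Lf_x0 : Lf x0 = 0 := by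
  have h1 : Ff (Lf x0) = x0 := F_Lf (le_refl x0)
  by_contra hne
  have hpos : 0 < Lf x0 := lt_of_le_of_ne (Lf_nonneg (le_refl x0)) (Ne.symm hne)
  have := F_exp (le_refl 0) hpos.le
  rw [F_zero, h1] at this
  nlinarith

lemma x0_le_one : x0 ≤ 1 := by
  rw [show (1:ℝ) = Real.sqrt 1 by rw [Real.sqrt_one]]
  apply Real.sqrt_le_sqrt
  rw [div_le_one Real.pi_pos]
  linarith [Real.pi_gt_three]

lemma exists_v : ∃ v : ℝ, x0 < v ∧ Lf v = v/2 := by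
  set X := x0 + 4 with hX
  have hx0X : x0 ≤ X := by rw [hX]; linarith
  have hLcont : ContinuousOn Lf (Icc x0 X) := by
    have hlip : LipschitzOnWith (41/2 : NNReal) Lf (Icc x0 X) := by
      apply LipschitzOnWith.of_dist_le_mul
      intro x hx y hy
      rw [Real.dist_eq, Real.dist_eq]
      have := Lf_abs hy.1 hx.1
      have hcoe : (((41:NNReal)/2 : NNReal) : ℝ) = 41/2 := by
        push_cast
        norm_num
      rw [hcoe]
      exact this
    exact hlip.continuousOn
  have hψcont : ContinuousOn (fun x => x/2 - Lf x) (Icc x0 X) :=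
    ((continuous_id.div_const 2).continuousOn).sub hLcont
  have hψX : (fun x => x/2 - Lf x) X ≤ 0 := by
    have h1 : X - x0 ≤ Lf X - Lf x0 := Lf_mono_exp (le_refl x0) hx0X
    rw [Lf_x0] at h1
    simp only
    rw [hX] at *
    have := x0_le_one
    linarith
  have hψx0 : (0:ℝ) ≤ (fun x => x/2 - Lf x) x0 := by
    simp only
    rw [Lf_x0]
    linarith [x0_pos]
  have hmem : (0:ℝ) ∈ Icc ((fun x => x/2 - Lf x) X) ((fun x => x/2 - Lf x) x0) :=
    ⟨hψX, hψx0⟩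
  obtain ⟨v, hv, hveq⟩ := intermediate_value_Icc' hx0X hψcont hmem
  refine ⟨v, ?_, ?_⟩
  · rcases eq_or_lt_of_le hv.1 with heq | hlt
    · exfalso
      rw [← heq] at hveq
      simp only at hveq
      rw [Lf_x0] at hveq
      have := x0_pos
      linarith
    · exact hlt
  · simp only at hveq
    linarith

lemma key_bounds {v x : ℝ} (hv : x0 < v) (hLv : Lf v = v/2) (hx : x0 ≤ x) :
    (1/4) * (x - v)^2 ≤ Rfun v - Rfun x ∧ Rfun v - Rfun x ≤ 10 * (x - v)^2 := by
  unfold Rfun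
  rcases le_total v x with h | h
  · have b1 := bound1 hv.le h
    have b2 := bound2 hv.le h
    rw [hLv] at b1 b2
    constructor
    · nlinarith [b1]
    · nlinarith [b2]
  · have b3 := bound3 hx h
    have b4 := bound4 hx h
    rw [hLv] at b3 b4
    constructor
    · nlinarith [b3]
    · nlinarith [b4]


end Aux

theorem stmt12 :
    ∃ vstar : ℝ, Real.sqrt (2 / Real.pi) < vstar ∧
      (∀ x, Real.sqrt (2 / Real.pi) ≤ x → Rfun x ≤ Rfun vstar) ∧
      (∀ w, Real.sqrt (2 / Real.pi) ≤ w →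
        (∀ x, Real.sqrt (2 / Real.pi) ≤ x → Rfun x ≤ Rfun w) → w = vstar) ∧
      (∀ x, Real.sqrt (2 / Real.pi) ≤ x →
        (1 / 4) * (x - vstar) ^ 2 ≤ Rfun vstar - Rfun x ∧
        Rfun vstar - Rfun x ≤ 10 * (x - vstar) ^ 2) := by
  obtain ⟨v, hv, hLv⟩ := exists_v
  refine ⟨v, hv, ?_, ?_, ?_⟩
  · intro x hx
    have := (key_bounds hv hLv hx).1
    nlinarith [sq_nonneg (x - v)]
  · intro w hw hmax
    have h1 := (key_bounds hv hLv hw).1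
    have h2 := hmax v hv.le
    nlinarith [sq_nonneg (w - v)]
  · intro x hx
    exact key_bounds hv hLv hx
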